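/- Let G be a k-uniform hypergraph on n vertices with degree sequence d₁ ≥ d₂ ≥ … ≥ d_n and d₁ > d₂ > 0, and let d* ∈ ((d₁/d₂)^{1/k}, d₁/d₂) be a root of h(t) = d₂t^k + (d₂−d₁)t^{k−1} − d₁. Then d₁ + d₁(1/d*)^{k−1} < d₁ + d₁^{1/k} d₂^{1−1/k}; consequently the bound μ(G) ≤ d₁ + d₁(1/d*)^{k−1} is strictly sharper than the bound μ(G) ≤ d₁ + d₁^{1/k} d₂^{1−1/k}. -/

import Mathlib

/-- The spectral radius of an order-`k` tensor of dimension `n`: the largest modulus of its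
(complex) eigenvalues, where `ρ` is an eigenvalue if `T x = ρ x^{[k-1]}` for some `x ≠ 0`. -/
noncomputable def specRad (n k : ℕ) (T : Fin n → (Fin (k-1) → Fin n) → ℝ) : ℝ :=
  sSup {r : ℝ | ∃ ρ : ℂ, ‖ρ‖ = r ∧ ∃ x : Fin n → ℂ, x ≠ 0 ∧
    ∀ i, (∑ f : Fin (k-1) → Fin n, (T i f : ℂ) * ∏ a, x (f a)) = ρ * x i ^ (k-1)}

/-- A hypergraph on vertex set `Fin n` is a finite set of edges; `hDeg` is the degree of
vertex `i`, the number of edges containing `i`. -/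
def hDeg (n : ℕ) (E : Finset (Finset (Fin n))) (i : Fin n) : ℕ :=
  (E.filter (fun e => i ∈ e)).card

/-- The average 2-degree of vertex `i` in a `k`-uniform hypergraph:
`m_i = (Σ_{{i,i₂,…,i_k} ∈ E_i} d_{i₂} ⋯ d_{i_k}) / d_i^{k-1}`. -/
noncomputable def avg2 (n k : ℕ) (E : Finset (Finset (Fin n))) (i : Fin n) : ℝ :=
  (∑ e ∈ E.filter (fun e => i ∈ e), ∏ j ∈ e.erase i, (hDeg n E j : ℝ)) /
    (hDeg n E i : ℝ) ^ (k-1)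

/-- The adjacency tensor of a `k`-uniform hypergraph: entry `1/(k-1)!` at `(i₁,…,i_k)` when
`{i₁,…,i_k}` is an edge, and `0` otherwise. -/
noncomputable def adjT (n k : ℕ) (E : Finset (Finset (Fin n))) :
    Fin n → (Fin (k-1) → Fin n) → ℝ :=
  fun i f => if insert i (Finset.image f Finset.univ) ∈ E then 1 / (k-1).factorial else 0

/-- The signless Laplacian tensor `Q(G) = D(G) + A(G)`. -/
noncomputable def qT (n k : ℕ) (E : Finset (Finset (Fin n))) :
    Fin n → (Fin (k-1) → Fin n) → ℝ :=
  fun i f => (if ∀ a, f a = i then (hDeg n E i : ℝ) else 0) + adjT n k E i f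

/-- A hypergraph is connected if every pair of distinct vertices is joined by a sequence of
pairwise intersecting edges. -/
def HConn (n : ℕ) (E : Finset (Finset (Fin n))) : Prop :=
  ∀ u v : Fin n, u ≠ v → ∃ r : ℕ, ∃ es : Fin (r+1) → Finset (Fin n),
    (∀ s, es s ∈ E) ∧ u ∈ es 0 ∧ v ∈ es (Fin.last r) ∧
    ∀ s : Fin r, (es s.castSucc ∩ es s.succ).Nonempty

/-!
Write `a = d₁^{1/k}` and `b = d₂^{1/k}`. The lower bound on `d*` says `1/d* < b/a`, so
`d₁ (1/d*)^{k-1} < a^k (b/a)^{k-1} = a b^{k-1} = d₁^{1/k} d₂^{1-1/k}`.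

For the spectral bound, a Collatz–Wielandt argument: if `T ≥ 0` and `w > 0` satisfy
`(T w^{k-1})_i ≤ B w_i^{k-1}` for all `i`, then every eigenvalue has modulus at most `B`
(look at the coordinate maximising `|x_i| / w_i`). For `Q(G)` the `i`-th row sum is
`d_i w_i^{k-1} + Σ_{e ∋ i} ∏_{j ∈ e ∖ i} w_j`. With `w = d*` on the vertex of degree `d₁` and `1`
elsewhere, this gives `B = d₁ + d₁ (1/d*)^{k-1}` at that vertex and at most `d₂ + d₂ d*` at the
others; `h(d*) = 0` is exactly the statement that these two numbers agree.
-/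

open Finset

section Enumerations

variable {α : Type*} [DecidableEq α] [Fintype α] {m : ℕ}

noncomputable def equivOfImageEq (s : Finset α) (hs : s.card = m) :
    {f : Fin m → α // univ.image f = s} ≃ (Fin m ≃ s) where
  toFun f := Equiv.ofBijective (fun a => ⟨f.1 a, f.2.subset (mem_image_of_mem _ (mem_univ a))⟩)
    ⟨fun a b hab => card_image_iff.1 (by rw [f.2, hs, card_univ, Fintype.card_fin])
        (mem_univ a) (mem_univ b) (congrArg Subtype.val hab),
      fun ⟨y, hy⟩ => by
        obtain ⟨a, -, ha⟩ := mem_image.1 (f.2.symm.subset hy)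
        exact ⟨a, Subtype.ext ha⟩⟩
  invFun σ := ⟨fun a => σ a, by
    ext y
    simp only [mem_image, mem_univ, true_and]
    exact ⟨fun ⟨a, ha⟩ => ha ▸ (σ a).2, fun hy => ⟨σ.symm ⟨y, hy⟩, by simp⟩⟩⟩
  left_inv _ := rfl
  right_inv _ := Equiv.ext fun _ => rfl

theorem sum_prod_of_image_eq {R : Type*} [CommSemiring R] (s : Finset α) (hs : s.card = m)
    (w : α → R) :
    ∑ f ∈ univ.filter (fun f : Fin m → α => univ.image f = s), ∏ a, w (f a) =
      m.factorial * ∏ j ∈ s, w j := by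
  rw [sum_subtype (p := fun f : Fin m → α => univ.image f = s) _ (fun f => by simp),
    Fintype.sum_equiv (equivOfImageEq s hs) _ (fun _ => ∏ j ∈ s, w j) (fun f => ?_), sum_const,
    card_univ,
    Fintype.card_equiv (Fintype.equivFinOfCardEq (by simpa using hs)).symm, Fintype.card_fin,
    nsmul_eq_mul]
  rw [← prod_coe_sort s, ← Equiv.prod_comp (equivOfImageEq s hs f)]
  exact Fintype.prod_congr _ _ fun a => rfl

end Enumerations

section Hypergraph

variable {n k : ℕ} {E : Finset (Finset (Fin n))}

theorem insert_image_eq_iff (hcard : ∀ e ∈ E, e.card = k) {e : Finset (Fin n)} (he : e ∈ E)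
    {i : Fin n} (hi : i ∈ e) (f : Fin (k-1) → Fin n) :
    insert i (univ.image f) = e ↔ univ.image f = e.erase i := by
  refine ⟨fun hfe => ?_, fun hf => by rw [hf, insert_erase hi]⟩
  have hi' : i ∉ univ.image f := by
    intro hmem
    rw [insert_eq_of_mem hmem] at hfe
    have hle : e.card ≤ k - 1 := hfe ▸ card_image_le.trans (by simp)
    have hpos : 0 < e.card := card_pos.2 ⟨i, hi⟩
    have := hcard e he
    omega
  rw [← hfe, erase_insert hi']

theorem sum_adjT_mul_prod (hcard : ∀ e ∈ E, e.card = k) (w : Fin n → ℝ) (i : Fin n) :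
    ∑ f, adjT n k E i f * ∏ a, w (f a) = ∑ e ∈ E.filter (i ∈ ·), ∏ j ∈ e.erase i, w j := by
  simp only [adjT, ite_mul, zero_mul, ← sum_filter]
  rw [← sum_fiberwise_of_maps_to (t := E.filter (i ∈ ·))
    (fun f hf => mem_filter.2 ⟨(mem_filter.1 hf).2, mem_insert_self _ _⟩)]
  refine sum_congr rfl fun e he => ?_
  obtain ⟨heE, hie⟩ := mem_filter.1 he
  have hfiber : (univ.filter fun f : Fin (k-1) → Fin n => insert i (univ.image f) ∈ E).filter
      (fun f => insert i (univ.image f) = e) = univ.filter (fun f => univ.image f = e.erase i) := by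
    ext f
    simp only [mem_filter, mem_univ, true_and, ← insert_image_eq_iff hcard heE hie f]
    exact ⟨And.right, fun h => ⟨h ▸ heE, h⟩⟩
  have hcard' : (e.erase i).card = k - 1 := by rw [card_erase_of_mem hie, hcard e heE]
  rw [hfiber, ← mul_sum, sum_prod_of_image_eq _ hcard', one_div, ← mul_assoc,
    inv_mul_cancel₀ (by positivity), one_mul]

theorem sum_qT_mul_prod (hcard : ∀ e ∈ E, e.card = k) (w : Fin n → ℝ) (i : Fin n) :
    ∑ f, qT n k E i f * ∏ a, w (f a) =
      hDeg n E i * w i ^ (k-1) + ∑ e ∈ E.filter (i ∈ ·), ∏ j ∈ e.erase i, w j := by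
  simp only [qT, add_mul, sum_add_distrib, sum_adjT_mul_prod hcard]
  congr 1
  simp [← funext_iff, ite_mul]

theorem qT_nonneg (i : Fin n) (f : Fin (k-1) → Fin n) : 0 ≤ qT n k E i f := by
  unfold qT adjT
  positivity

end Hypergraph

section SpectralRadius

variable {n k : ℕ} {T : Fin n → (Fin (k-1) → Fin n) → ℝ} {w : Fin n → ℝ} {B : ℝ}

theorem norm_le_of_eigen_of_rowSum_le (hT : ∀ i f, 0 ≤ T i f) (hw : ∀ j, 0 < w j)
    (hrow : ∀ i, ∑ f, T i f * ∏ a, w (f a) ≤ B * w i ^ (k-1))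
    {ρ : ℂ} {x : Fin n → ℂ} (hx : x ≠ 0)
    (heig : ∀ i, ∑ f, (T i f : ℂ) * ∏ a, x (f a) = ρ * x i ^ (k-1)) : ‖ρ‖ ≤ B := by
  obtain ⟨j₀, hj₀⟩ := Function.ne_iff.1 hx
  have : Nonempty (Fin n) := ⟨j₀⟩
  obtain ⟨i, hi⟩ := Finite.exists_max fun j => ‖x j‖ / w j
  set t := ‖x i‖ / w i
  have hx_le : ∀ j, ‖x j‖ ≤ w j * t := fun j => by
    rw [mul_comm, ← div_le_iff₀ (hw j)]
    exact hi j
  have ht : 0 < t := (div_pos (norm_pos_iff.2 hj₀) (hw j₀)).trans_le (hi j₀)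
  have hxi : ‖x i‖ = w i * t := by unfold t; field_simp [(hw i).ne']
  have hxi_pos : 0 < ‖x i‖ := hxi ▸ mul_pos (hw i) ht
  refine le_of_mul_le_mul_right ?_ (pow_pos hxi_pos (k-1))
  calc ‖ρ‖ * ‖x i‖ ^ (k-1) = ‖∑ f, (T i f : ℂ) * ∏ a, x (f a)‖ := by
        rw [heig, norm_mul, norm_pow]
    _ ≤ ∑ f, T i f * ∏ a, ‖x (f a)‖ := by
        refine (norm_sum_le _ _).trans_eq (sum_congr rfl fun f _ => ?_)
        rw [norm_mul, norm_prod, Complex.norm_real, Real.norm_of_nonneg (hT i f)]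
    _ ≤ ∑ f, T i f * ∏ a, (w (f a) * t) := by
        gcongr with f _ a
        · exact hT i f
        · exact hx_le _
    _ = (∑ f, T i f * ∏ a, w (f a)) * t ^ (k-1) := by
        simp only [prod_mul_distrib, prod_const, card_univ, Fintype.card_fin, sum_mul, mul_assoc]
    _ ≤ B * w i ^ (k-1) * t ^ (k-1) := mul_le_mul_of_nonneg_right (hrow i) (by positivity)
    _ = B * ‖x i‖ ^ (k-1) := by rw [hxi, mul_pow, mul_assoc]

theorem specRad_le_of_rowSum_le (hT : ∀ i f, 0 ≤ T i f) (hw : ∀ j, 0 < w j) (hB : 0 ≤ B)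
    (hrow : ∀ i, ∑ f, T i f * ∏ a, w (f a) ≤ B * w i ^ (k-1)) : specRad n k T ≤ B := by
  refine Real.sSup_le ?_ hB
  rintro r ⟨ρ, rfl, x, hx, heig⟩
  exact norm_le_of_eigen_of_rowSum_le hT hw hrow hx heig

end SpectralRadius

theorem specRad_qT_le {n k : ℕ} {E : Finset (Finset (Fin n))} (hcard : ∀ e ∈ E, e.card = k)
    (v : Fin n) {d t B : ℝ} (ht : 1 ≤ t) (hdeg : ∀ i ≠ v, (hDeg n E i : ℝ) ≤ d)
    (hBv : hDeg n E v + hDeg n E v * (1/t) ^ (k-1) ≤ B) (hBd : d + d * t ≤ B) :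
    specRad n k (qT n k E) ≤ B := by
  have hw : ∀ j, 0 < (Pi.mulSingle v t : Fin n → ℝ) j := fun j => by
    rw [Pi.mulSingle_apply]
    split_ifs <;> linarith
  refine specRad_le_of_rowSum_le qT_nonneg hw ((by positivity : (0:ℝ) ≤ _).trans hBv) fun i => ?_
  rw [sum_qT_mul_prod hcard]
  simp only [prod_pi_mulSingle']
  by_cases hi : i = v
  · subst hi
    have ht0 : t ^ (k-1) ≠ 0 := pow_ne_zero _ (by linarith)
    rw [Pi.mulSingle_eq_same]
    calc (hDeg n E i : ℝ) * t ^ (k-1) + ∑ e ∈ E.filter (i ∈ ·), (if i ∈ e.erase i then t else 1)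
        = (hDeg n E i + hDeg n E i * (1/t) ^ (k-1)) * t ^ (k-1) := by
          simp [hDeg, add_mul, ht0]
      _ ≤ B * t ^ (k-1) := by gcongr
  · rw [Pi.mulSingle_eq_of_ne hi, one_pow, mul_one, mul_one]
    calc (hDeg n E i : ℝ) + ∑ e ∈ E.filter (i ∈ ·), (if v ∈ e.erase i then t else 1)
        ≤ hDeg n E i + hDeg n E i * t := by
          rw [hDeg, ← nsmul_eq_mul]
          refine add_le_add_right (sum_le_card_nsmul _ _ _ fun e _ => ?_) _
          split_ifs <;> linarith
      _ ≤ d + d * t := by gcongr; exacts [hdeg i hi, hdeg i hi]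
      _ ≤ B := hBd

theorem mul_one_div_pow_lt_rpow_mul_rpow {k : ℕ} (hk : 2 ≤ k) {d₁ d₂ x : ℝ} (hd₁ : 0 < d₁)
    (hd₂ : 0 < d₂) (hx : (d₁ / d₂) ^ ((1:ℝ)/k) < x) :
    d₁ * (1/x) ^ (k-1) < d₁ ^ ((1:ℝ)/k) * d₂ ^ (1 - (1:ℝ)/k) := by
  set a := d₁ ^ ((1:ℝ)/k)
  set b := d₂ ^ ((1:ℝ)/k)
  have ha : 0 < a := by positivity
  have hb : 0 < b := by positivity
  have hx0 : 0 < x := (by positivity : (0:ℝ) < (d₁ / d₂) ^ ((1:ℝ)/k)).trans hx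
  have hak : a ^ k = d₁ := by
    unfold a
    rw [one_div]
    exact Real.rpow_inv_natCast_pow hd₁.le (by omega)
  have hbk : d₂ ^ (1 - (1:ℝ)/k) = b ^ (k-1) := by
    rw [← Real.rpow_natCast, ← Real.rpow_mul hd₂.le, Nat.cast_sub (by omega)]
    congr 1
    field_simp
    simp
  have hxab : 1/x < b/a := by
    rw [Real.div_rpow hd₁.le hd₂.le] at hx
    rw [one_div_lt hx0 (by positivity), one_div_div]
    exact hx
  calc d₁ * (1/x) ^ (k-1) < a ^ k * (b/a) ^ (k-1) := by
        rw [hak]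
        gcongr
        omega
    _ = a * b ^ (k-1) := by
        rw [div_pow, ← Nat.sub_add_cancel (by omega : 1 ≤ k), pow_succ, Nat.add_sub_cancel]
        field_simp
    _ = d₁ ^ ((1:ℝ)/k) * d₂ ^ (1 - (1:ℝ)/k) := by rw [hbk]

/-- With `d₁ > d₂ > 0` the two largest degrees of a `k`-uniform hypergraph `G` and `d*` a
root of `h(t) = d₂t^k + (d₂−d₁)t^{k−1} − d₁` in `((d₁/d₂)^{1/k}, d₁/d₂)`, one has
`d₁ + d₁(1/d*)^{k−1} < d₁ + d₁^{1/k} d₂^{1−1/k}`; consequently the bound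
`μ(G) ≤ d₁ + d₁(1/d*)^{k−1}` is strictly sharper than `μ(G) ≤ d₁ + d₁^{1/k} d₂^{1−1/k}`. -/
theorem stmt15 (n k : ℕ) (hk : 2 ≤ k) (hkn : k ≤ n)
    (E : Finset (Finset (Fin n))) (hcard : ∀ e ∈ E, e.card = k)
    (hsort : ∀ i j : Fin n, i ≤ j → hDeg n E j ≤ hDeg n E i)
    (hd2pos : 0 < hDeg n E ⟨1, by omega⟩)
    (hd12 : hDeg n E ⟨1, by omega⟩ < hDeg n E ⟨0, by omega⟩)
    (dstar : ℝ)
    (hroot : (hDeg n E ⟨1, by omega⟩ : ℝ) * dstar ^ k +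
        ((hDeg n E ⟨1, by omega⟩ : ℝ) - (hDeg n E ⟨0, by omega⟩ : ℝ)) * dstar ^ (k-1) -
        (hDeg n E ⟨0, by omega⟩ : ℝ) = 0)
    (hlow : ((hDeg n E ⟨0, by omega⟩ : ℝ) / (hDeg n E ⟨1, by omega⟩ : ℝ)) ^ ((1 : ℝ)/k)
        < dstar) :
    (hDeg n E ⟨0, by omega⟩ : ℝ) + (hDeg n E ⟨0, by omega⟩ : ℝ) * (1/dstar) ^ (k-1)
        < (hDeg n E ⟨0, by omega⟩ : ℝ) +
          (hDeg n E ⟨0, by omega⟩ : ℝ) ^ ((1 : ℝ)/k) *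
            (hDeg n E ⟨1, by omega⟩ : ℝ) ^ (1 - (1 : ℝ)/k) ∧
      specRad n k (qT n k E) ≤
        (hDeg n E ⟨0, by omega⟩ : ℝ) + (hDeg n E ⟨0, by omega⟩ : ℝ) * (1/dstar) ^ (k-1) := by
  have hd₂ : (0:ℝ) < hDeg n E ⟨1, by omega⟩ := by exact_mod_cast hd2pos
  have hd₂₁ : (hDeg n E ⟨1, by omega⟩ : ℝ) < hDeg n E ⟨0, by omega⟩ := by exact_mod_cast hd12
  set d₁ : ℝ := (hDeg n E ⟨0, by omega⟩ : ℝ)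
  set d₂ : ℝ := (hDeg n E ⟨1, by omega⟩ : ℝ)
  have hd₁ : 0 < d₁ := hd₂.trans hd₂₁
  have hdstar : 1 ≤ dstar :=
    (Real.one_le_rpow ((one_le_div hd₂).2 hd₂₁.le) (by positivity)).trans hlow.le
  have hbalance : d₂ + d₂ * dstar = d₁ + d₁ * (1/dstar) ^ (k-1) := by
    have hpow : dstar ^ k = dstar ^ (k-1) * dstar := by
      rw [← pow_succ, Nat.sub_add_cancel (by omega)]
    have : dstar ^ (k-1) ≠ 0 := pow_ne_zero _ (by linarith)
    rw [one_div, inv_pow]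
    field_simp
    linear_combination hroot - d₂ * hpow
  refine ⟨add_lt_add_right (mul_one_div_pow_lt_rpow_mul_rpow hk hd₁ hd₂ hlow) d₁,
    specRad_qT_le hcard _ hdstar (fun i hi => ?_) le_rfl hbalance.le⟩
  have h1i : (⟨1, by omega⟩ : Fin n) ≤ i := by
    rw [Fin.le_def]
    exact Nat.one_le_iff_ne_zero.2 fun h => hi (Fin.ext h)
  exact Nat.cast_le.2 (hsort _ i h1i)
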